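/- Let B_3 be the quadratic cardinal B-spline (B_3 = B_2 ∗ B_1 where B_1 is the indicator of [0,1) and B_2 = B_1 ∗ B_1), and define the short-support quadratic spline wavelet ψ(x) = −(1/4) B_3(2x) + (3/4) B_3(2x−1) − (3/4) B_3(2x−2) + (1/4) B_3(2x−3), corresponding to the wavelet filter g = [−1/4, 3/4, −3/4, 1/4]. Then ψ has three vanishing moments: ∫_ℝ x^q ψ(x) dx = 0 for q = 0, 1, 2. -/

import Mathlib

open MeasureTheory

/-- The indicator function of `[0,1)`, i.e. the cardinal B-spline of order 1. -/
noncomputable def B1 : ℝ → ℝ := Set.indicator (Set.Ico (0 : ℝ) 1) (fun _ => (1 : ℝ))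

/-- Cardinal B-splines: `B 1 = B1` and `B (m+1) = B m ∗ B1` (Lebesgue convolution). -/
noncomputable def B : ℕ → ℝ → ℝ
  | 0 => fun _ => 0
  | 1 => B1
  | (m + 2) => fun x => ∫ t : ℝ, B (m + 1) (x - t) * B1 t

/-- The short-support quadratic spline wavelet, with filter `g = [−1/4, 3/4, −3/4, 1/4]`,
built from the quadratic cardinal B-spline `B 3`. -/
noncomputable def ψ : ℝ → ℝ := fun x =>
  -(1 / 4) * B 3 (2 * x) + (3 / 4) * B 3 (2 * x - 1) - (3 / 4) * B 3 (2 * x - 2) +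
    (1 / 4) * B 3 (2 * x - 3)

/-! Substituting `y = 2x - k` turns `∫ x ^ q * B 3 (2x - k)` into a polynomial of degree `q` in
the shift `k` whose coefficients are moments of `B 3`; these are finite because `B 3`, an iterated
convolution of `B1`, is integrable with compact support. The filter
`g k = (-1) ^ (k + 1) * C(3, k) / 4` is a multiple of the third finite difference, so
`∑ k, g k * k ^ i = 0` for `i ≤ 2` and every moment of order at most two cancels. -/

open Finset
open scoped Convolution

theorem B_add_two (m : ℕ) : B (m + 2) = B (m + 1) ⋆[ContinuousLinearMap.mul ℝ ℝ] B1 := by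
  funext x
  rw [convolution_mul_swap]
  rfl

theorem integrable_B1 : Integrable B1 :=
  (integrable_indicator_iff measurableSet_Ico).2 (integrableOn_const measure_Ico_lt_top.ne)

theorem hasCompactSupport_B1 : HasCompactSupport B1 :=
  HasCompactSupport.intro isCompact_Icc fun _ hx =>
    Set.indicator_of_notMem (fun h => hx (Set.Ico_subset_Icc_self h)) _

theorem integrable_B_succ (m : ℕ) : Integrable (B (m + 1)) := by
  induction m with
  | zero => exact integrable_B1
  | succ m ih => rw [B_add_two]; exact ih.integrable_convolution _ integrable_B1

theorem hasCompactSupport_B_succ (m : ℕ) : HasCompactSupport (B (m + 1)) := by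
  induction m with
  | zero => exact hasCompactSupport_B1
  | succ m ih => rw [B_add_two]; exact ih.convolution _ hasCompactSupport_B1

theorem integrable_pow_mul_B_succ (m j : ℕ) : Integrable fun x => x ^ j * B (m + 1) x :=
  (integrableOn_iff_integrable_of_support_subset (subset_tsupport _)).1 <|
    ((integrable_B_succ m).locallyIntegrable.continuous_mul
      (continuous_pow j)).integrableOn_isCompact (hasCompactSupport_B_succ m).mul_left

theorem integral_comp_mul_sub {E : Type*} [NormedAddCommGroup E] [NormedSpace ℝ E] (f : ℝ → E)
    (a c : ℝ) : ∫ x, f (a * x - c) = |a⁻¹| • ∫ y, f y := by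
  simpa only [integral_sub_right_eq_self] using
    Measure.integral_comp_mul_left (fun y => f (y - c)) a

theorem MeasureTheory.Integrable.comp_mul_sub {E : Type*} [NormedAddCommGroup E] {f : ℝ → E}
    (hf : Integrable f) {a : ℝ} (ha : a ≠ 0) (c : ℝ) : Integrable fun x => f (a * x - c) :=
  (hf.comp_sub_right c).comp_mul_left' ha

theorem pow_mul_comp_mul_sub_eq {a : ℝ} (ha : a ≠ 0) (φ : ℝ → ℝ) (q : ℕ) (c x : ℝ) :
    x ^ q * φ (a * x - c) = ∑ m ∈ range (q + 1),
      (a ^ q)⁻¹ * q.choose m * c ^ (q - m) * ((a * x - c) ^ m * φ (a * x - c)) := by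
  have hx : x ^ q = (a ^ q)⁻¹ * (a * x - c + c) ^ q := by
    rw [sub_add_cancel, mul_pow, inv_mul_cancel_left₀ (pow_ne_zero q ha)]
  rw [hx, add_pow, mul_sum, sum_mul]
  refine sum_congr rfl fun m _ => ?_
  ring

theorem integrable_pow_mul_comp_mul_sub {a : ℝ} (ha : a ≠ 0) {φ : ℝ → ℝ} {q : ℕ}
    (hφ : ∀ j ≤ q, Integrable fun y => y ^ j * φ y) (c : ℝ) :
    Integrable fun x => x ^ q * φ (a * x - c) := by
  simp_rw [pow_mul_comp_mul_sub_eq ha]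
  exact integrable_finsetSum _ fun m hm =>
    ((hφ m (mem_range_succ_iff.1 hm)).comp_mul_sub ha c).const_mul _

theorem integral_pow_mul_comp_mul_sub {a : ℝ} (ha : a ≠ 0) {φ : ℝ → ℝ} {q : ℕ}
    (hφ : ∀ j ≤ q, Integrable fun y => y ^ j * φ y) (c : ℝ) :
    ∫ x, x ^ q * φ (a * x - c) = ∑ m ∈ range (q + 1),
      (|a⁻¹| * (a ^ q)⁻¹ * q.choose m * ∫ y, y ^ m * φ y) * c ^ (q - m) := by
  simp_rw [pow_mul_comp_mul_sub_eq ha]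
  rw [integral_finsetSum]
  · refine sum_congr rfl fun m _ => ?_
    rw [integral_const_mul, integral_comp_mul_sub (fun y => y ^ m * φ y), smul_eq_mul]
    ring
  · exact fun m hm => ((hφ m (mem_range_succ_iff.1 hm)).comp_mul_sub ha c).const_mul _

theorem integral_pow_mul_sum_comp_mul_sub_eq_zero {ι : Type*} (s : Finset ι) (g c : ι → ℝ)
    {φ : ℝ → ℝ} {a : ℝ} (ha : a ≠ 0) {p q : ℕ} (hqp : q < p)
    (hφ : ∀ j ≤ q, Integrable fun y => y ^ j * φ y)
    (hg : ∀ i < p, ∑ k ∈ s, g k * c k ^ i = 0) :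
    ∫ x, x ^ q * ∑ k ∈ s, g k * φ (a * x - c k) = 0 := by
  simp_rw [mul_sum, mul_left_comm _ (g _)]
  rw [integral_finsetSum _ fun k _ => (integrable_pow_mul_comp_mul_sub ha hφ (c k)).const_mul _]
  simp_rw [integral_const_mul, integral_pow_mul_comp_mul_sub ha hφ, mul_sum]
  rw [sum_comm]
  refine sum_eq_zero fun m _ => ?_
  simp_rw [mul_left_comm (g _)]
  rw [← mul_sum, hg _ (by omega), mul_zero]

theorem ψ_eq_sum_choose (x : ℝ) :
    ψ x = ∑ k ∈ range 4, (-1) ^ (k + 1) * (Nat.choose 3 k / 4 : ℝ) * B 3 (2 * x - k) := by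
  simp only [ψ, sum_range_succ, sum_range_zero]
  norm_num [Nat.choose]
  ring

/-- The short-support quadratic spline wavelet has three vanishing moments. -/
theorem short3_vanishing_moments :
    ∀ q : ℕ, q ≤ 2 → (∫ x : ℝ, x ^ q * ψ x) = 0 := by
  intro q hq
  simp_rw [ψ_eq_sum_choose]
  refine integral_pow_mul_sum_comp_mul_sub_eq_zero _ _ _ two_ne_zero (Nat.lt_succ_of_le hq)
    (fun j _ => integrable_pow_mul_B_succ 2 j) fun i hi => ?_
  interval_cases i <;> norm_num [sum_range_succ]
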